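/- Under the SGD setup, if F is μ-strongly convex with L-Lipschitz gradient, E[g_t | F_t] = ∇F(θ_t), E[‖g_t‖² | F_t] ≤ G² almost surely, and 0 < η ≤ μ/L², then for every t ≥ 1, E[‖θ_t − θ*‖²] ≤ (1 − 2η(μ − L²η)) · E[‖θ_{t−1} − θ*‖²] + 2G²η². -/

import Mathlib

/-!
Expanding the update gives
`‖θₜ₊₁ - θ*‖² = ‖θₜ - θ*‖² - 2η⟪θₜ - θ*, gₜ⟫ + η²‖gₜ‖²`.
Since `θₜ - θ*` is `ℱₜ`-measurable, the cross term has the same expectation as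
`⟪θₜ - θ*, ∇F(θₜ)⟫`, which strong convexity together with `∇F(θ*) = 0` bounds below by
`μ‖θₜ - θ*‖²`; the last term has expectation at most `G²`. This yields the contraction
`1 - 2ημ` with additive term `η²G²`.
-/

open MeasureTheory ProbabilityTheory Filter
open scoped RealInnerProductSpace

section InnerProductSpace

variable {E : Type*} [NormedAddCommGroup E] [InnerProductSpace ℝ E]

theorem IsLocalMin.hasGradientAt_eq_zero [CompleteSpace E] {f : E → ℝ} {f' x : E}
    (h : IsLocalMin f x) (hf : HasGradientAt f f' x) : f' = 0 :=
  (InnerProductSpace.toDual ℝ E).map_eq_zero_iff.mp (h.hasFDerivAt_eq_zero hf.hasFDerivAt)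

theorem mul_sq_norm_sub_le_inner_of_strongConvex {f : E → ℝ} {f' : E → E} {μ : ℝ} {x₀ : E}
    (hsc : ∀ x y, f y + ⟪f' y, x - y⟫ + μ / 2 * ‖x - y‖ ^ 2 ≤ f x) (h₀ : f' x₀ = 0) (x : E) :
    μ * ‖x - x₀‖ ^ 2 ≤ ⟪x - x₀, f' x⟫ := by
  have h₁ := hsc x₀ x
  have h₂ := hsc x x₀
  rw [h₀, inner_zero_left] at h₂
  rw [← neg_sub x x₀, inner_neg_right, norm_neg, real_inner_comm] at h₁
  linarith

theorem norm_sub_smul_sq (a g : E) (η : ℝ) :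
    ‖a - η • g‖ ^ 2 = ‖a‖ ^ 2 - 2 * η * ⟪a, g⟫ + η ^ 2 * ‖g‖ ^ 2 := by
  rw [norm_sub_sq_real, real_inner_smul_right, norm_smul, Real.norm_eq_abs, mul_pow, sq_abs]
  ring

end InnerProductSpace

namespace MeasureTheory

variable {Ω E : Type*} {m m0 : MeasurableSpace Ω} {P : Measure Ω}
  [NormedAddCommGroup E] [InnerProductSpace ℝ E]

omit [InnerProductSpace ℝ E] in
theorem MemLp.integrable_norm_sq {f : Ω → E} (hf : MemLp f 2 P) :
    Integrable (fun ω => ‖f ω‖ ^ 2) P :=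
  (memLp_two_iff_integrable_sq_norm hf.1).mp hf

theorem MemLp.integrable_inner {f g : Ω → E} (hf : MemLp f 2 P) (hg : MemLp g 2 P) :
    Integrable (fun ω => ⟪f ω, g ω⟫) P := by
  refine (L2.integrable_inner (𝕜 := ℝ) hf.toLp hg.toLp).congr ?_
  filter_upwards [hf.coeFn_toLp, hg.coeFn_toLp] with ω hfω hgω
  rw [hfω, hgω]

theorem integral_norm_sub_smul_sq {a g : Ω → E} (ha : MemLp a 2 P) (hg : MemLp g 2 P) (η : ℝ) :
    ∫ ω, ‖a ω - η • g ω‖ ^ 2 ∂P =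
      ∫ ω, ‖a ω‖ ^ 2 ∂P - 2 * η * ∫ ω, ⟪a ω, g ω⟫ ∂P + η ^ 2 * ∫ ω, ‖g ω‖ ^ 2 ∂P := by
  simp_rw [norm_sub_smul_sq]
  have hinner := (ha.integrable_inner hg).const_mul (2 * η)
  rw [integral_add, integral_sub ha.integrable_norm_sq hinner, integral_const_mul,
    integral_const_mul]
  exacts [ha.integrable_norm_sq.sub hinner, hg.integrable_norm_sq.const_mul _]

/-- Conditional expectation is the orthogonal projection of `L²` onto the `m`-measurable
functions, so it is self-adjoint and fixes `f`. -/
theorem integral_inner_condExp_right [CompleteSpace E] [IsFiniteMeasure P] (hm : m ≤ m0)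
    {f g : Ω → E} (hf : MemLp f 2 P) (hfm : AEStronglyMeasurable[m] f P) (hg : MemLp g 2 P) :
    ∫ ω, ⟪f ω, (P[g|m]) ω⟫ ∂P = ∫ ω, ⟪f ω, g ω⟫ ∂P := by
  have hfm' : AEStronglyMeasurable[m] (hf.toLp f) P := hfm.congr hf.coeFn_toLp.symm
  have h := inner_condExpL2_eq_inner_fun (𝕜 := ℝ) hm hg.toLp hf.toLp hfm'
  rw [real_inner_comm, L2.inner_def, L2.inner_def] at h
  refine Eq.trans ?_ (h.trans (integral_congr_ae ?_))
  · refine integral_congr_ae ?_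
    filter_upwards [hf.coeFn_toLp, hg.condExpL2_ae_eq_condExp (𝕜 := ℝ) hm] with ω hfω hgω
    rw [hfω, hgω]
  · filter_upwards [hf.coeFn_toLp, hg.coeFn_toLp] with ω hfω hgω
    rw [hfω, hgω, real_inner_comm]

theorem integral_le_of_ae_condExp_le [IsProbabilityMeasure P] (hm : m ≤ m0) {f : Ω → ℝ} {c : ℝ}
    (h : ∀ᵐ ω ∂P, (P[f|m]) ω ≤ c) : ∫ ω, f ω ∂P ≤ c := by
  rw [← integral_condExp hm]
  calc ∫ ω, (P[f|m]) ω ∂P ≤ ∫ _, c ∂P := integral_mono_ae integrable_condExp (integrable_const c) h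
    _ = c := by simp

theorem stronglyAdapted_of_eq_sub_smul {ℱ : Filtration ℕ m0} {x g : ℕ → Ω → E} {η : ℝ}
    (hx : ∀ t ω, x (t + 1) ω = x t ω - η • g t ω) (hx₀ : StronglyMeasurable[ℱ 0] (x 0))
    (hg : ∀ t, StronglyMeasurable[ℱ (t + 1)] (g t)) : StronglyAdapted ℱ x := by
  intro t
  induction t with
  | zero => exact hx₀
  | succ t ih =>
    rw [funext (hx t)]
    exact (ih.mono (ℱ.mono t.le_succ)).sub ((hg t).const_smul η)

end MeasureTheory

theorem integral_sq_dist_sgd_step_le {Ω E : Type*} {m0 : MeasurableSpace Ω} {P : Measure Ω}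
    [IsProbabilityMeasure P] [NormedAddCommGroup E] [InnerProductSpace ℝ E] [CompleteSpace E]
    {ℱ : Filtration ℕ m0} {f : E → ℝ} {f' : E → E} {x₀ : E} {θ g : ℕ → Ω → E} {η μ G : ℝ}
    (hη : 0 < η) (hf'₀ : f' x₀ = 0)
    (hsc : ∀ x y, f y + ⟪f' y, x - y⟫ + μ / 2 * ‖x - y‖ ^ 2 ≤ f x)
    (hθ : StronglyAdapted ℱ θ) (hupdate : ∀ t ω, θ (t + 1) ω = θ t ω - η • g t ω)
    (hg_cond : ∀ t, P[g t | ℱ t] =ᵐ[P] fun ω => f' (θ t ω))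
    (hg_sq : ∀ t, ∀ᵐ ω ∂P, (P[fun ω => ‖g t ω‖ ^ 2 | ℱ t]) ω ≤ G ^ 2)
    (hθint : ∀ t, Integrable (fun ω => ‖θ t ω - x₀‖ ^ 2) P) (s : ℕ) :
    ∫ ω, ‖θ (s + 1) ω - x₀‖ ^ 2 ∂P ≤
      (1 - 2 * η * μ) * ∫ ω, ‖θ s ω - x₀‖ ^ 2 ∂P + η ^ 2 * G ^ 2 := by
  have hdist : ∀ t, MemLp (fun ω => θ t ω - x₀) 2 P := fun t =>
    (memLp_two_iff_integrable_sq_norm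
      (((hθ t).mono (ℱ.le t)).aestronglyMeasurable.sub aestronglyMeasurable_const)).mpr (hθint t)
  have hg : MemLp (g s) 2 P := by
    convert ((hdist s).sub (hdist (s + 1))).const_smul η⁻¹ using 1
    funext ω
    simp only [Pi.sub_apply, Pi.smul_apply, hupdate, sub_sub_sub_cancel_right, sub_sub_cancel,
      inv_smul_smul₀ hη.ne']
  have hcross : ∫ ω, ⟪θ s ω - x₀, g s ω⟫ ∂P = ∫ ω, ⟪θ s ω - x₀, f' (θ s ω)⟫ ∂P := by
    rw [← integral_inner_condExp_right (ℱ.le s) (hdist s)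
      ((hθ s).aestronglyMeasurable.sub aestronglyMeasurable_const) hg]
    refine integral_congr_ae ?_
    filter_upwards [hg_cond s] with ω hω
    rw [hω]
  have hdrift : μ * ∫ ω, ‖θ s ω - x₀‖ ^ 2 ∂P ≤ ∫ ω, ⟪θ s ω - x₀, g s ω⟫ ∂P := by
    rw [hcross, ← integral_const_mul]
    have hint : Integrable (fun ω => ⟪θ s ω - x₀, f' (θ s ω)⟫) P := by
      refine ((hdist s).integrable_inner (hg.condExp (m := ℱ s) one_le_two)).congr ?_
      filter_upwards [hg_cond s] with ω hω
      rw [hω]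
    exact integral_mono ((hθint s).const_mul μ) hint fun ω =>
      mul_sq_norm_sub_le_inner_of_strongConvex hsc hf'₀ (θ s ω)
  have hvar : ∫ ω, ‖g s ω‖ ^ 2 ∂P ≤ G ^ 2 := integral_le_of_ae_condExp_le (ℱ.le s) (hg_sq s)
  calc ∫ ω, ‖θ (s + 1) ω - x₀‖ ^ 2 ∂P
      = ∫ ω, ‖θ s ω - x₀‖ ^ 2 ∂P - 2 * η * ∫ ω, ⟪θ s ω - x₀, g s ω⟫ ∂P
          + η ^ 2 * ∫ ω, ‖g s ω‖ ^ 2 ∂P := by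
        simp_rw [hupdate, sub_right_comm _ (η • _)]
        exact integral_norm_sub_smul_sq (hdist s) hg η
    _ ≤ ∫ ω, ‖θ s ω - x₀‖ ^ 2 ∂P - 2 * η * (μ * ∫ ω, ‖θ s ω - x₀‖ ^ 2 ∂P) + η ^ 2 * G ^ 2 := by
        gcongr
    _ = (1 - 2 * η * μ) * ∫ ω, ‖θ s ω - x₀‖ ^ 2 ∂P + η ^ 2 * G ^ 2 := by ring

theorem sgd_one_step_squared_distance_bound_general
    {Ω : Type*} {m0 : MeasurableSpace Ω} {P : Measure Ω} [IsProbabilityMeasure P]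
    {d : ℕ} (ℱ : Filtration ℕ m0)
    (F : EuclideanSpace ℝ (Fin d) → ℝ)
    (gradF : EuclideanSpace ℝ (Fin d) → EuclideanSpace ℝ (Fin d))
    (θstar : EuclideanSpace ℝ (Fin d))
    (θ g : ℕ → Ω → EuclideanSpace ℝ (Fin d))
    (η μ L G : ℝ)
    (hη : 0 < η)
    -- F is differentiable with gradient gradF
    (hgrad : ∀ x, HasGradientAt F (gradF x) x)
    -- θ* is a minimizer of F
    (hmin : ∀ x, F θstar ≤ F x)
    -- μ-strong convexity
    (hsc : ∀ x y, F y + ⟪gradF y, x - y⟫ + μ / 2 * ‖x - y‖ ^ 2 ≤ F x)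
    -- SGD update rule
    (hupdate : ∀ t ω, θ (t + 1) ω = θ t ω - η • g t ω)
    -- adaptedness
    (hθ0 : StronglyMeasurable[ℱ 0] (θ 0))
    (hg_meas : ∀ t, StronglyMeasurable[ℱ (t + 1)] (g t))
    -- unbiasedness: E[g_t | ℱ_t] = ∇F(θ_t)
    (hg_cond : ∀ t, P[g t | ℱ t] =ᵐ[P] fun ω => gradF (θ t ω))
    -- conditional second-moment bound: E[‖g_t‖² | ℱ_t] ≤ G² a.s.
    (hg_sq : ∀ t, ∀ᵐ ω ∂P, (P[fun ω => ‖g t ω‖ ^ 2 | ℱ t]) ω ≤ G ^ 2)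
    -- square integrability
        (hθint : ∀ t, Integrable (fun ω => ‖θ t ω - θstar‖ ^ 2) P) :
    ∀ t : ℕ, 1 ≤ t →
      ∫ ω, ‖θ t ω - θstar‖ ^ 2 ∂P ≤
        (1 - 2 * η * (μ - L ^ 2 * η)) * ∫ ω, ‖θ (t - 1) ω - θstar‖ ^ 2 ∂P
          + 2 * G ^ 2 * η ^ 2 := by
  have hgrad₀ : gradF θstar = 0 :=
    IsLocalMin.hasGradientAt_eq_zero (Eventually.of_forall hmin) (hgrad θstar)
  have hθ := stronglyAdapted_of_eq_sub_smul hupdate hθ0 hg_meas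
  intro t ht
  obtain ⟨s, rfl⟩ := Nat.exists_eq_add_of_le' ht
  rw [Nat.add_sub_cancel]
  refine (integral_sq_dist_sgd_step_le hη hgrad₀ hsc hθ hupdate hg_cond hg_sq hθint s).trans ?_
  have hX : 0 ≤ ∫ ω, ‖θ s ω - θstar‖ ^ 2 ∂P := integral_nonneg fun _ => sq_nonneg _
  nlinarith [mul_nonneg (mul_nonneg (sq_nonneg L) (sq_nonneg η)) hX, sq_nonneg (G * η)]

/-- **SplitSGD, Lemma 1 (Appendix A).** Under the SGD setup with μ-strong convexity,
L-Lipschitz gradient, unbiased gradients, conditional second-moment bound G², and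
learning rate 0 < η ≤ μ/L², for every t,
E[‖θ_t − θ*‖²] ≤ (1 − 2η(μ − L²η))^t E[‖θ_0 − θ*‖²] + G²η/(μ − L²η). -/
theorem sgd_one_step_squared_distance_bound
    {Ω : Type*} {m0 : MeasurableSpace Ω} {P : Measure Ω} [IsProbabilityMeasure P]
    {d : ℕ} (ℱ : Filtration ℕ m0)
    (F : EuclideanSpace ℝ (Fin d) → ℝ)
    (gradF : EuclideanSpace ℝ (Fin d) → EuclideanSpace ℝ (Fin d))
    (θstar : EuclideanSpace ℝ (Fin d))
    (θ g : ℕ → Ω → EuclideanSpace ℝ (Fin d))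
    (η μ L G : ℝ)
    (hη : 0 < η) (hμ : 0 < μ) (hL : 0 < L)
    (hηle : η ≤ μ / L ^ 2)
    -- F is differentiable with gradient gradF
    (hgrad : ∀ x, HasGradientAt F (gradF x) x)
    -- θ* is a minimizer of F
    (hmin : ∀ x, F θstar ≤ F x)
    -- μ-strong convexity
    (hsc : ∀ x y, F y + ⟪gradF y, x - y⟫ + μ / 2 * ‖x - y‖ ^ 2 ≤ F x)
    -- L-Lipschitz gradient
    (hlip : ∀ x y, ‖gradF x - gradF y‖ ≤ L * ‖x - y‖)
    -- SGD update rule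
    (hupdate : ∀ t ω, θ (t + 1) ω = θ t ω - η • g t ω)
    -- adaptedness
    (hθ0 : StronglyMeasurable[ℱ 0] (θ 0))
    (hg_meas : ∀ t, StronglyMeasurable[ℱ (t + 1)] (g t))
    -- unbiasedness: E[g_t | ℱ_t] = ∇F(θ_t)
    (hg_cond : ∀ t, P[g t | ℱ t] =ᵐ[P] fun ω => gradF (θ t ω))
    -- conditional second-moment bound: E[‖g_t‖² | ℱ_t] ≤ G² a.s.
    (hg_sq : ∀ t, ∀ᵐ ω ∂P, (P[fun ω => ‖g t ω‖ ^ 2 | ℱ t]) ω ≤ G ^ 2)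
    -- square integrability
        (hθint : ∀ t, Integrable (fun ω => ‖θ t ω - θstar‖ ^ 2) P) :
    ∀ t : ℕ, 1 ≤ t →
      ∫ ω, ‖θ t ω - θstar‖ ^ 2 ∂P ≤
        (1 - 2 * η * (μ - L ^ 2 * η)) * ∫ ω, ‖θ (t - 1) ω - θstar‖ ^ 2 ∂P
          + 2 * G ^ 2 * η ^ 2 :=
  sgd_one_step_squared_distance_bound_general ℱ F gradF θstar θ g η μ L G hη hgrad hmin hsc hupdate
    hθ0 hg_meas hg_cond hg_sq hθint
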